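/- For any finite vocabulary τ, any τ-structures 𝔄, 𝔅 with a nonempty set X ⊆ dom(𝔄) and b ∈ dom(𝔅), and any natural number ℓ: 𝔄,X ≤^ℓ_hornALC 𝔅,b if and only if there exists a nonempty X₀ ⊆ X with 𝔄,X₀ ⪯^ℓ_horn 𝔅,b. Moreover, if 𝔄 and 𝔅 are finite, then 𝔄,X ≤_hornALC 𝔅,b if and only if there exists a nonempty X₀ ⊆ X with 𝔄,X₀ ⪯_horn 𝔅,b. -/

import Mathlib

/-!
Soundness is an induction on hornALC-concepts: the forth and back clauses of the Horn game match
`∃R` and `∀R`, and the simulations `b ⪯_sim a` carry the ELU premise of an implication from `b`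
to every `a ∈ X₀`.

For completeness take `X₀ = {a ∈ X | b ⪯^ℓ_sim a}`. Inside `X` this set is defined by the
characteristic ELU-concept `L` of the depth-`ℓ` simulation type of `b`, so `L → C` transfers every
hornALC-concept `C` of depth `≤ ℓ` from `X₀` to `b` (with `C = ⊥`, `X₀` is nonempty). If `X₀` lost
the `ℓ`-round Horn game, the failing clause would yield a separating concept `A`, `∀R.(L' → H)` or
`∃R.⨅ᵢ(Lᵢ → Hᵢ)` of depth `≤ ℓ`. All of these can be drawn from one finite family, which is what
keeps the last conjunction finite even when `b` has infinitely many successors.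

A Horn simulation wins every `ℓ`-round game. Conversely, for finite structures there are finitely
many candidate sets and successors while the `ℓ`-round relations shrink as `ℓ` grows, so a
pigeonhole argument turns winners of all `ℓ`-round games into a Horn simulation.
-/

/-- A τ-structure over domain `D`, for a vocabulary with concept names `Con`
(unary predicates) and role names `Rol` (binary predicates). -/
structure Str (Con Rol : Type) (D : Type) where
  conI : Con → Set D
  rolI : Rol → Set (D × D)

/-- ALC-concepts over the vocabulary `(Con, Rol)`. -/
inductive ALC (Con Rol : Type) where
  | top : ALC Con Rol
  | bot : ALC Con Rol
  | atomic : Con → ALC Con Rol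
  | neg : ALC Con Rol → ALC Con Rol
  | disj : ALC Con Rol → ALC Con Rol → ALC Con Rol
  | conj : ALC Con Rol → ALC Con Rol → ALC Con Rol
  | impl : ALC Con Rol → ALC Con Rol → ALC Con Rol
  | ex : Rol → ALC Con Rol → ALC Con Rol
  | all : Rol → ALC Con Rol → ALC Con Rol

variable {Con Rol D D1 D2 : Type}

/-- The extension `C^𝔄` of an ALC-concept in a structure. -/
def ALC.sem (M : Str Con Rol D) : ALC Con Rol → Set D
  | .top => Set.univ
  | .bot => ∅
  | .atomic A => M.conI A
  | .neg C => (C.sem M)ᶜ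
  | .disj C C' => C.sem M ∪ C'.sem M
  | .conj C C' => C.sem M ∩ C'.sem M
  | .impl C C' => (C.sem M)ᶜ ∪ C'.sem M
  | .ex R C => {a | ∃ b, (a, b) ∈ M.rolI R ∧ b ∈ C.sem M}
  | .all R C => {a | ∀ b, (a, b) ∈ M.rolI R → b ∈ C.sem M}

/-- The depth of an ALC-concept: maximal nesting of `∃R` and `∀R`. -/
def ALC.depth : ALC Con Rol → ℕ
  | .top | .bot | .atomic _ => 0
  | .neg C => C.depth
  | .disj C C' | .conj C C' | .impl C C' => max C.depth C'.depth
  | .ex _ C | .all _ C => C.depth + 1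

/-- ELU-concepts: built from concept names and ⊤ using ⊓, ⊔ and ∃R only. -/
inductive ALC.IsELU : ALC Con Rol → Prop
  | top : IsELU .top
  | atomic (A : Con) : IsELU (.atomic A)
  | conj {C C' : ALC Con Rol} : IsELU C → IsELU C' → IsELU (.conj C C')
  | disj {C C' : ALC Con Rol} : IsELU C → IsELU C' → IsELU (.disj C C')
  | ex (R : Rol) {C : ALC Con Rol} : IsELU C → IsELU (.ex R C)

/-- hornALC-concepts: `H ::= ⊥ | ⊤ | A | H⊓H' | L→H | ∃R.H | ∀R.H` with `L` an ELU-concept. -/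
inductive ALC.IsHorn : ALC Con Rol → Prop
  | bot : IsHorn .bot
  | top : IsHorn .top
  | atomic (A : Con) : IsHorn (.atomic A)
  | conj {H H' : ALC Con Rol} : IsHorn H → IsHorn H' → IsHorn (.conj H H')
  | impl {L H : ALC Con Rol} : IsELU L → IsHorn H → IsHorn (.impl L H)
  | ex (R : Rol) {H : ALC Con Rol} : IsHorn H → IsHorn (.ex R H)
  | all (R : Rol) {H : ALC Con Rol} : IsHorn H → IsHorn (.all R H)

/-- `S` is a simulation between `M` and `N`. -/
def IsSim (M : Str Con Rol D1) (N : Str Con Rol D2) (S : Set (D1 × D2)) : Prop :=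
  ∀ a b, (a, b) ∈ S →
    (∀ A, a ∈ M.conI A → b ∈ N.conI A) ∧
    (∀ R a', (a, a') ∈ M.rolI R → ∃ b', (b, b') ∈ N.rolI R ∧ (a', b') ∈ S)

/-- `𝔄,a ⪯_sim 𝔅,b`: some simulation contains `(a,b)`. -/
def Sim (M : Str Con Rol D1) (N : Str Con Rol D2) (a : D1) (b : D2) : Prop :=
  ∃ S, IsSim M N S ∧ (a, b) ∈ S

/-- The ℓ-round simulation relations `⪯^ℓ_sim`. -/
def SimL (M : Str Con Rol D1) (N : Str Con Rol D2) : ℕ → D1 → D2 → Prop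
  | 0 => fun a b => ∀ A, a ∈ M.conI A → b ∈ N.conI A
  | ℓ + 1 => fun a b =>
      (∀ A, a ∈ M.conI A → b ∈ N.conI A) ∧
      ∀ R a', (a, a') ∈ M.rolI R → ∃ b', (b, b') ∈ N.rolI R ∧ SimL M N ℓ a' b'

/-- `X R↑ Y`. -/
def relUp (R : Set (D1 × D1)) (X Y : Set D1) : Prop := ∀ a ∈ X, ∃ b ∈ Y, (a, b) ∈ R

/-- `X R↓ Y`. -/
def relDown (R : Set (D1 × D1)) (X Y : Set D1) : Prop := ∀ b ∈ Y, ∃ a ∈ X, (a, b) ∈ R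

/-- `Z` is a Horn simulation between `M` and `N`. -/
def IsHornSim (M : Str Con Rol D1) (N : Str Con Rol D2) (Z : Set (Set D1 × D2)) : Prop :=
  ∀ X b, (X, b) ∈ Z →
    X.Nonempty ∧
    (∀ A, X ⊆ M.conI A → b ∈ N.conI A) ∧
    (∀ R Y, relUp (M.rolI R) X Y →
        ∃ Y', Y' ⊆ Y ∧ ∃ b', (b, b') ∈ N.rolI R ∧ (Y', b') ∈ Z) ∧
    (∀ R b', (b, b') ∈ N.rolI R → ∃ Y, relDown (M.rolI R) X Y ∧ (Y, b') ∈ Z) ∧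
    (∀ a ∈ X, Sim N M b a)

/-- `𝔄,X ⪯_horn 𝔅,b`: some Horn simulation contains `(X,b)`. -/
def HornSim (M : Str Con Rol D1) (N : Str Con Rol D2) (X : Set D1) (b : D2) : Prop :=
  ∃ Z, IsHornSim M N Z ∧ (X, b) ∈ Z

/-- The ℓ-round Horn simulation relations `⪯^ℓ_horn`. -/
def HornSimL (M : Str Con Rol D1) (N : Str Con Rol D2) : ℕ → Set D1 → D2 → Prop
  | 0 => fun X b =>
      X.Nonempty ∧ (∀ A, X ⊆ M.conI A → b ∈ N.conI A) ∧ ∀ a ∈ X, SimL N M 0 b a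
  | ℓ + 1 => fun X b =>
      (X.Nonempty ∧ (∀ A, X ⊆ M.conI A → b ∈ N.conI A) ∧ ∀ a ∈ X, SimL N M 0 b a) ∧
      (∀ R Y, relUp (M.rolI R) X Y →
          ∃ Y', Y' ⊆ Y ∧ ∃ b', (b, b') ∈ N.rolI R ∧ HornSimL M N ℓ Y' b') ∧
      (∀ R b', (b, b') ∈ N.rolI R → ∃ Y, relDown (M.rolI R) X Y ∧ HornSimL M N ℓ Y b') ∧
      (∀ a ∈ X, SimL N M (ℓ + 1) b a)

/-- `𝔄,X ≤^ℓ_hornALC 𝔅,b`. -/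
def leHornDepth (M : Str Con Rol D1) (N : Str Con Rol D2) (ℓ : ℕ) (X : Set D1) (b : D2) : Prop :=
  ∀ C : ALC Con Rol, C.IsHorn → C.depth ≤ ℓ → X ⊆ C.sem M → b ∈ C.sem N

/-- `𝔄,X ≤_hornALC 𝔅,b`. -/
def leHorn (M : Str Con Rol D1) (N : Str Con Rol D2) (X : Set D1) (b : D2) : Prop :=
  ∀ C : ALC Con Rol, C.IsHorn → X ⊆ C.sem M → b ∈ C.sem N

/-- `𝔄,a ≤^ℓ_ELU 𝔅,b`. -/
def leELUDepth (M : Str Con Rol D1) (N : Str Con Rol D2) (ℓ : ℕ) (a : D1) (b : D2) : Prop :=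
  ∀ C : ALC Con Rol, C.IsELU → C.depth ≤ ℓ → a ∈ C.sem M → b ∈ C.sem N

/-- `𝔄,a ≤_ELU 𝔅,b`. -/
def leELU (M : Str Con Rol D1) (N : Str Con Rol D2) (a : D1) (b : D2) : Prop :=
  ∀ C : ALC Con Rol, C.IsELU → a ∈ C.sem M → b ∈ C.sem N


namespace ALC

noncomputable def sConj (Γ : Set (ALC Con Rol)) [Finite Γ] : ALC Con Rol :=
  (Set.toFinite Γ).toFinset.toList.foldr conj top

variable {Γ : Set (ALC Con Rol)} [Finite Γ]

theorem mem_sem_sConj {M : Str Con Rol D} {x : D} :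
    x ∈ (sConj Γ).sem M ↔ ∀ C ∈ Γ, x ∈ C.sem M := by
  suffices ∀ l : List (ALC Con Rol), x ∈ (l.foldr conj top).sem M ↔ ∀ C ∈ l, x ∈ C.sem M by
    simpa [sConj] using this (Set.toFinite Γ).toFinset.toList
  intro l
  induction l <;> simp_all [sem]

theorem sConj_induction {P : ALC Con Rol → Prop} (htop : P top)
    (hconj : ∀ {C C'}, P C → P C' → P (conj C C')) (h : ∀ C ∈ Γ, P C) : P (sConj Γ) := by
  suffices ∀ l : List (ALC Con Rol), (∀ C ∈ l, P C) → P (l.foldr conj top) from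
    this _ (by simpa using h)
  intro l
  induction l with
  | nil => exact fun _ => htop
  | cons C l ih => exact fun h => hconj (h C (by simp)) (ih fun C' hC' => h C' (by simp [hC']))

end ALC

theorem exists_forall_of_forall_exists_antitone {α : Type*} [Finite α] {P : ℕ → α → Prop}
    (hP : ∀ a, Antitone (P · a)) (h : ∀ ℓ, ∃ a, P ℓ a) : ∃ a, ∀ ℓ, P ℓ a := by
  by_contra! hfail
  choose bound hbound using hfail
  have := Fintype.ofFinite α
  obtain ⟨a, ha⟩ := h (Finset.univ.sup bound)
  exact hbound a (hP a (Finset.le_sup (Finset.mem_univ a)) ha)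

section Simulation

variable {M : Str Con Rol D1} {N : Str Con Rol D2}

theorem SimL.mem_conI {A : Con} : ∀ {ℓ a b}, SimL M N ℓ a b → a ∈ M.conI A → b ∈ N.conI A
  | 0, _, _, h => h A
  | _ + 1, _, _, h => h.1 A

theorem SimL.of_succ : ∀ {ℓ a b}, SimL M N (ℓ + 1) a b → SimL M N ℓ a b
  | 0, _, _, h => h.1
  | _ + 1, _, _, h => ⟨h.1, fun R a' ha' =>
      let ⟨b', hb', hs⟩ := h.2 R a' ha'
      ⟨b', hb', hs.of_succ⟩⟩

theorem SimL.mono {ℓ m : ℕ} (hlm : ℓ ≤ m) {a b} (h : SimL M N m a b) : SimL M N ℓ a b := by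
  induction hlm with
  | refl => exact h
  | step _ ih => exact ih h.of_succ

theorem IsSim.simL {S : Set (D1 × D2)} (hS : IsSim M N S) :
    ∀ {ℓ a b}, (a, b) ∈ S → SimL M N ℓ a b
  | 0, a, b, h => (hS a b h).1
  | _ + 1, a, b, h => ⟨(hS a b h).1, fun R a' ha' =>
      let ⟨b', hb', hS'⟩ := (hS a b h).2 R a' ha'
      ⟨b', hb', hS.simL hS'⟩⟩

theorem isSim_setOf_forall_simL [Finite D2] : IsSim M N {p | ∀ ℓ, SimL M N ℓ p.1 p.2} := by
  refine fun a b h => ⟨fun A => (h 0).mem_conI, fun R a' ha' => ?_⟩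
  obtain ⟨b', hb'⟩ := exists_forall_of_forall_exists_antitone
    (fun b' ℓ m hlm ⟨hb', hs⟩ => ⟨hb', hs.mono hlm⟩) (fun ℓ => (h (ℓ + 1)).2 R a' ha')
  exact ⟨b', (hb' 0).1, fun ℓ => (hb' ℓ).2⟩

theorem sim_iff_forall_simL [Finite D2] {a : D1} {b : D2} :
    Sim M N a b ↔ ∀ ℓ, SimL M N ℓ a b :=
  ⟨fun ⟨_, hS, h⟩ _ => hS.simL h, fun h => ⟨_, isSim_setOf_forall_simL, h⟩⟩

theorem HornSimL.nonempty : ∀ {ℓ X b}, HornSimL M N ℓ X b → X.Nonempty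
  | 0, _, _, h => h.1
  | _ + 1, _, _, h => h.1.1

theorem HornSimL.mem_conI {A : Con} :
    ∀ {ℓ X b}, HornSimL M N ℓ X b → X ⊆ M.conI A → b ∈ N.conI A
  | 0, _, _, h => h.2.1 A
  | _ + 1, _, _, h => h.1.2.1 A

theorem HornSimL.simL : ∀ {ℓ X b}, HornSimL M N ℓ X b → ∀ a ∈ X, SimL N M ℓ b a
  | 0, _, _, h => h.2.2
  | _ + 1, _, _, h => h.2.2.2

theorem HornSimL.of_succ : ∀ {ℓ X b}, HornSimL M N (ℓ + 1) X b → HornSimL M N ℓ X b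
  | 0, _, _, h => h.1
  | _ + 1, _, _, h =>
    ⟨h.1,
      fun R Y hup =>
        let ⟨Y', hY', b', hb', hs⟩ := h.2.1 R Y hup
        ⟨Y', hY', b', hb', hs.of_succ⟩,
      fun R b' hb' =>
        let ⟨Y, hY, hs⟩ := h.2.2.1 R b' hb'
        ⟨Y, hY, hs.of_succ⟩,
      fun a ha => (h.2.2.2 a ha).of_succ⟩

theorem HornSimL.mono {ℓ m : ℕ} (hlm : ℓ ≤ m) {X b} (h : HornSimL M N m X b) :
    HornSimL M N ℓ X b := by
  induction hlm with
  | refl => exact h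
  | step _ ih => exact ih h.of_succ

theorem IsHornSim.hornSimL {Z : Set (Set D1 × D2)} (hZ : IsHornSim M N Z) :
    ∀ {ℓ X b}, (X, b) ∈ Z → HornSimL M N ℓ X b
  | 0, X, b, h => by
    obtain ⟨hne, hatom, -, -, hsim⟩ := hZ X b h
    refine ⟨hne, hatom, fun a ha => ?_⟩
    obtain ⟨_, hS, h'⟩ := hsim a ha
    exact hS.simL h'
  | ℓ + 1, X, b, h => by
    obtain ⟨-, -, hforth, hback, hsim⟩ := hZ X b h
    refine ⟨hZ.hornSimL (ℓ := 0) h, fun R Y hup => ?_, fun R b' hb' => ?_,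
      fun a ha => ?_⟩
    · obtain ⟨Y', hY', b', hb', h'⟩ := hforth R Y hup
      exact ⟨Y', hY', b', hb', hZ.hornSimL h'⟩
    · obtain ⟨Y, hY, h'⟩ := hback R b' hb'
      exact ⟨Y, hY, hZ.hornSimL h'⟩
    · obtain ⟨_, hS, h'⟩ := hsim a ha
      exact hS.simL h'

theorem isHornSim_setOf_forall_hornSimL [Finite D1] [Finite D2] :
    IsHornSim M N {p | ∀ ℓ, HornSimL M N ℓ p.1 p.2} := by
  intro X b h
  refine ⟨(h 0).nonempty, fun A => (h 0).mem_conI, fun R Y hup => ?_, fun R b' hb' => ?_,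
    fun a ha => sim_iff_forall_simL.2 fun ℓ => (h ℓ).simL a ha⟩
  · obtain ⟨⟨Y', b'⟩, hY'⟩ := exists_forall_of_forall_exists_antitone
      (P := fun ℓ (p : Set D1 × D2) => p.1 ⊆ Y ∧ (b, p.2) ∈ N.rolI R ∧ HornSimL M N ℓ p.1 p.2)
      (fun p ℓ m hlm ⟨hY, hb, hs⟩ => ⟨hY, hb, hs.mono hlm⟩)
      (fun ℓ => let ⟨Y', hY', b', hb', hs⟩ := (h (ℓ + 1)).2.1 R Y hup; ⟨(Y', b'), hY', hb', hs⟩)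
    exact ⟨Y', (hY' 0).1, b', (hY' 0).2.1, fun ℓ => (hY' ℓ).2.2⟩
  · obtain ⟨Y, hY⟩ := exists_forall_of_forall_exists_antitone
      (fun Y ℓ m hlm ⟨hY, hs⟩ => ⟨hY, hs.mono hlm⟩) (fun ℓ => (h (ℓ + 1)).2.2.1 R b' hb')
    exact ⟨Y, (hY 0).1, fun ℓ => (hY ℓ).2⟩

theorem hornSim_iff_forall_hornSimL [Finite D1] [Finite D2] {X : Set D1} {b : D2} :
    HornSim M N X b ↔ ∀ ℓ, HornSimL M N ℓ X b :=
  ⟨fun ⟨_, hZ, h⟩ _ => hZ.hornSimL h, fun h => ⟨_, isHornSim_setOf_forall_hornSimL, h⟩⟩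

end Simulation

section Preservation

variable {M : Str Con Rol D1} {N : Str Con Rol D2}

theorem ALC.IsELU.mem_sem_of_simL {C : ALC Con Rol} (hC : C.IsELU) :
    ∀ {ℓ a b}, C.depth ≤ ℓ → SimL M N ℓ a b → a ∈ C.sem M → b ∈ C.sem N := by
  induction hC with
  | top => exact fun _ _ _ => trivial
  | atomic A => exact fun _ hs => hs.mem_conI
  | conj _ _ ih ih' =>
    intro ℓ a b hd hs ha
    simp only [depth, max_le_iff] at hd
    exact ⟨ih hd.1 hs ha.1, ih' hd.2 hs ha.2⟩
  | disj _ _ ih ih' =>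
    intro ℓ a b hd hs ha
    simp only [depth, max_le_iff] at hd
    exact ha.imp (ih hd.1 hs) (ih' hd.2 hs)
  | ex R _ ih =>
    rintro (_ | ℓ) a b hd hs ⟨a', ha', hC⟩
    · simp [depth] at hd
    · obtain ⟨b', hb', hs'⟩ := hs.2 R a' ha'
      exact ⟨b', hb', ih (Nat.le_of_succ_le_succ hd) hs' hC⟩

theorem ALC.IsHorn.mem_sem_of_hornSimL {C : ALC Con Rol} (hC : C.IsHorn) :
    ∀ {ℓ X b}, C.depth ≤ ℓ → HornSimL M N ℓ X b → X ⊆ C.sem M → b ∈ C.sem N := by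
  induction hC with
  | bot =>
    intro ℓ X b _ hs hX
    exact absurd (hX hs.nonempty.some_mem) id
  | top => exact fun _ _ _ => trivial
  | atomic A => exact fun _ hs => hs.mem_conI
  | conj _ _ ih ih' =>
    intro ℓ X b hd hs hX
    simp only [depth, max_le_iff] at hd
    exact ⟨ih hd.1 hs fun a ha => (hX ha).1, ih' hd.2 hs fun a ha => (hX ha).2⟩
  | @impl L _ hL _ ih =>
    intro ℓ X b hd hs hX
    simp only [depth, max_le_iff] at hd
    by_cases hbL : b ∈ L.sem N
    · refine Or.inr (ih hd.2 hs fun a ha => (hX ha).resolve_left ?_)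
      exact Set.notMem_compl_iff.2 (hL.mem_sem_of_simL hd.1 (hs.simL a ha) hbL)
    · exact Or.inl hbL
  | ex R _ ih =>
    rintro (_ | ℓ) X b hd hs hX
    · simp [depth] at hd
    · have hup : relUp (M.rolI R) X _ := fun a ha =>
        let ⟨a', ha', hH⟩ := hX ha
        ⟨a', hH, ha'⟩
      obtain ⟨Y', hY', b', hb', hs'⟩ := hs.2.1 R _ hup
      exact ⟨b', hb', ih (Nat.le_of_succ_le_succ hd) hs' hY'⟩
  | all R _ ih =>
    rintro (_ | ℓ) X b hd hs hX b' hb'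
    · simp [depth] at hd
    · obtain ⟨Y, hY, hs'⟩ := hs.2.2.1 R b' hb'
      refine ih (Nat.le_of_succ_le_succ hd) hs' fun a' ha' => ?_
      obtain ⟨a, ha, haa'⟩ := hY a' ha'
      exact hX ha a' haa'

theorem leHornDepth_of_hornSimL {ℓ : ℕ} {X : Set D1} {b : D2} (h : HornSimL M N ℓ X b) :
    leHornDepth M N ℓ X b :=
  fun _ hC hd => hC.mem_sem_of_hornSimL hd h

theorem leHornDepth.mono {ℓ : ℕ} {X Y : Set D1} {b : D2} (h : leHornDepth M N ℓ X b)
    (hXY : X ⊆ Y) : leHornDepth M N ℓ Y b :=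
  fun C hC hd hY => h C hC hd (hXY.trans hY)

theorem leHorn_iff_forall_leHornDepth {X : Set D1} {b : D2} :
    leHorn M N X b ↔ ∀ ℓ, leHornDepth M N ℓ X b :=
  ⟨fun h _ C hC _ => h C hC, fun h C hC => h C.depth C hC le_rfl⟩

theorem leHornDepth.nonempty {ℓ : ℕ} {X : Set D1} {b : D2} (h : leHornDepth M N ℓ X b) :
    X.Nonempty :=
  Set.nonempty_iff_ne_empty.2 fun hX => h .bot .bot (Nat.zero_le _) (hX ▸ Set.empty_subset _)

end Preservation

section CharacteristicConcept

abbrev SimType (Con Rol : Type) : ℕ → Type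
  | 0 => Set Con
  | ℓ + 1 => Set Con × (Rol → Set (SimType Con Rol ℓ))

instance SimType.finite [Finite Con] [Finite Rol] : ∀ ℓ, Finite (SimType Con Rol ℓ)
  | 0 => inferInstanceAs (Finite (Set Con))
  | ℓ + 1 =>
    have := SimType.finite ℓ
    inferInstanceAs (Finite (Set Con × (Rol → Set (SimType Con Rol ℓ))))

def Str.simType (N : Str Con Rol D) : (ℓ : ℕ) → D → SimType Con Rol ℓ
  | 0, b => {A | b ∈ N.conI A}
  | ℓ + 1, b => ({A | b ∈ N.conI A}, fun R => N.simType ℓ '' {b' | (b, b') ∈ N.rolI R})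

variable [Finite Con] [Finite Rol]

noncomputable def SimType.concept : {ℓ : ℕ} → SimType Con Rol ℓ → ALC Con Rol
  | 0, t => .sConj (.atomic '' t)
  | _ + 1, t => .sConj (.atomic '' t.1 ∪ ⋃ R, (fun s => .ex R s.concept) '' t.2 R)

theorem SimType.mem_sem_concept_zero {M : Str Con Rol D} {t : SimType Con Rol 0} {x : D} :
    x ∈ t.concept.sem M ↔ ∀ A ∈ t, x ∈ M.conI A := by
  simp [SimType.concept, ALC.mem_sem_sConj, ALC.sem]

theorem SimType.mem_sem_concept_succ {M : Str Con Rol D} {ℓ : ℕ} {t : SimType Con Rol (ℓ + 1)}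
    {x : D} :
    x ∈ t.concept.sem M ↔ (∀ A ∈ t.1, x ∈ M.conI A) ∧
      ∀ R, ∀ s ∈ t.2 R, ∃ x', (x, x') ∈ M.rolI R ∧ x' ∈ s.concept.sem M := by
  simp only [SimType.concept, ALC.mem_sem_sConj, Set.mem_union, Set.mem_iUnion, Set.mem_image,
    or_imp, forall_and, forall_exists_index, and_imp, forall_apply_eq_imp_iff₂]
  rw [forall_comm]
  simp [forall_apply_eq_imp_iff₂, ALC.sem]

theorem SimType.isELU_concept : ∀ {ℓ} (t : SimType Con Rol ℓ), t.concept.IsELU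
  | 0, _ => ALC.sConj_induction ALC.IsELU.top ALC.IsELU.conj (by
      rintro _ ⟨A, -, rfl⟩
      exact .atomic A)
  | _ + 1, _ => ALC.sConj_induction ALC.IsELU.top ALC.IsELU.conj (by
      rintro _ (⟨A, -, rfl⟩ | ⟨_, ⟨R, rfl⟩, s, -, rfl⟩)
      exacts [.atomic A, .ex R s.isELU_concept])

theorem SimType.depth_concept_le : ∀ {ℓ} (t : SimType Con Rol ℓ), t.concept.depth ≤ ℓ
  | 0, _ => ALC.sConj_induction (P := (·.depth ≤ 0)) le_rfl max_le (by rintro _ ⟨A, -, rfl⟩; rfl)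
  | _ + 1, _ => ALC.sConj_induction (P := (·.depth ≤ _)) (Nat.zero_le _) max_le (by
      rintro _ (⟨A, -, rfl⟩ | ⟨_, ⟨R, rfl⟩, s, -, rfl⟩)
      exacts [Nat.zero_le _, Nat.succ_le_succ s.depth_concept_le])

theorem Str.mem_sem_concept_simType (N : Str Con Rol D) :
    ∀ ℓ b, b ∈ (N.simType ℓ b).concept.sem N
  | 0, _ => SimType.mem_sem_concept_zero.2 fun _ => id
  | ℓ + 1, _ => SimType.mem_sem_concept_succ.2
    ⟨fun _ => id, by rintro R _ ⟨b', hb', rfl⟩; exact ⟨b', hb', N.mem_sem_concept_simType ℓ b'⟩⟩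

theorem Str.simL_of_mem_sem_concept_simType (N : Str Con Rol D2) {M : Str Con Rol D1} :
    ∀ {ℓ b a}, a ∈ (N.simType ℓ b).concept.sem M → SimL N M ℓ b a
  | 0, _, _, h => SimType.mem_sem_concept_zero.1 h
  | ℓ + 1, _, _, h => by
    rw [SimType.mem_sem_concept_succ] at h
    refine ⟨h.1, fun R b' hb' => ?_⟩
    obtain ⟨a', ha', h'⟩ := h.2 R _ ⟨b', hb', rfl⟩
    exact ⟨a', ha', N.simL_of_mem_sem_concept_simType h'⟩

theorem Str.subset_sem_impl_concept_simType (N : Str Con Rol D2) {M : Str Con Rol D1} {ℓ : ℕ}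
    {Y : Set D1} {b : D2} {H : ALC Con Rol} (hY : {a ∈ Y | SimL N M ℓ b a} ⊆ H.sem M) :
    Y ⊆ (ALC.impl (N.simType ℓ b).concept H).sem M := fun _ ha =>
  or_iff_not_imp_left.2 fun haL =>
    hY ⟨ha, N.simL_of_mem_sem_concept_simType (Set.notMem_compl_iff.1 haL)⟩

theorem Str.mem_sem_impl_concept_simType_iff (N : Str Con Rol D) {ℓ : ℕ} {b : D}
    {H : ALC Con Rol} : b ∈ (ALC.impl (N.simType ℓ b).concept H).sem N ↔ b ∈ H.sem N :=
  or_iff_right (not_not.2 (N.mem_sem_concept_simType ℓ b))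

end CharacteristicConcept

section SeparatingFamily

variable [Fintype Con] [Fintype Rol]

open scoped Classical

noncomputable def guardedFamily (ℓ : ℕ) (F : Finset (ALC Con Rol)) : Finset (ALC Con Rol) :=
  letI := Fintype.ofFinite (SimType Con Rol ℓ)
  Finset.univ.biUnion fun t : SimType Con Rol ℓ => (insert ALC.bot F).image (.impl t.concept)

noncomputable def hornFamily : ℕ → Finset (ALC Con Rol)
  | 0 => Finset.univ.image .atomic
  | ℓ + 1 => Finset.univ.image .atomic ∪ Finset.univ.biUnion fun R =>
      (guardedFamily ℓ (hornFamily ℓ)).powerset.image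
        (fun Γ : Finset (ALC Con Rol) => .ex R (.sConj (Γ : Set (ALC Con Rol)))) ∪
        (guardedFamily ℓ (hornFamily ℓ)).image (.all R)

theorem impl_mem_guardedFamily {ℓ : ℕ} {F : Finset (ALC Con Rol)} (t : SimType Con Rol ℓ)
    {H : ALC Con Rol} (hH : H ∈ insert ALC.bot F) : .impl t.concept H ∈ guardedFamily ℓ F := by
  simp only [guardedFamily, Finset.mem_biUnion, Finset.mem_univ, Finset.mem_image, true_and]
  exact ⟨t, H, hH, rfl⟩

theorem atomic_mem_hornFamily {ℓ : ℕ} (A : Con) : .atomic A ∈ hornFamily (Rol := Rol) ℓ := by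
  cases ℓ <;> simp [hornFamily]

theorem ex_mem_hornFamily {ℓ : ℕ} (R : Rol) {Γ : Finset (ALC Con Rol)}
    (hΓ : Γ ⊆ guardedFamily ℓ (hornFamily ℓ)) :
    .ex R (.sConj (Γ : Set (ALC Con Rol))) ∈ hornFamily (ℓ + 1) := by
  simp only [hornFamily, Finset.mem_union, Finset.mem_biUnion, Finset.mem_image,
    Finset.mem_powerset]
  exact Or.inr ⟨R, Finset.mem_univ _, Or.inl ⟨Γ, hΓ, rfl⟩⟩

theorem all_mem_hornFamily {ℓ : ℕ} (R : Rol) {G : ALC Con Rol}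
    (hG : G ∈ guardedFamily ℓ (hornFamily ℓ)) : .all R G ∈ hornFamily (ℓ + 1) := by
  simp only [hornFamily, Finset.mem_union, Finset.mem_biUnion, Finset.mem_image]
  exact Or.inr ⟨R, Finset.mem_univ _, Or.inr ⟨G, hG, rfl⟩⟩

theorem isHorn_and_depth_le_of_mem_guardedFamily {ℓ : ℕ} {F : Finset (ALC Con Rol)}
    (hF : ∀ C ∈ F, C.IsHorn ∧ C.depth ≤ ℓ) {G : ALC Con Rol} (hG : G ∈ guardedFamily ℓ F) :
    G.IsHorn ∧ G.depth ≤ ℓ := by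
  simp only [guardedFamily, Finset.mem_biUnion, Finset.mem_image] at hG
  obtain ⟨t, -, H, hH, rfl⟩ := hG
  obtain ⟨hHorn, hd⟩ : H.IsHorn ∧ H.depth ≤ ℓ := by
    rcases Finset.mem_insert.1 hH with rfl | hH
    exacts [⟨.bot, Nat.zero_le _⟩, hF H hH]
  exact ⟨.impl (SimType.isELU_concept t) hHorn, max_le (SimType.depth_concept_le t) hd⟩

theorem isHorn_and_depth_le_of_mem_hornFamily :
    ∀ {ℓ} {C : ALC Con Rol}, C ∈ hornFamily ℓ → C.IsHorn ∧ C.depth ≤ ℓ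
  | 0, C, hC => by
    obtain ⟨A, -, rfl⟩ := Finset.mem_image.1 hC
    exact ⟨.atomic A, le_rfl⟩
  | ℓ + 1, C, hC => by
    have hG {G} := isHorn_and_depth_le_of_mem_guardedFamily (G := G)
      fun C hC => isHorn_and_depth_le_of_mem_hornFamily (ℓ := ℓ) hC
    simp only [hornFamily, Finset.mem_union, Finset.mem_biUnion, Finset.mem_image,
      Finset.mem_powerset] at hC
    rcases hC with ⟨A, -, rfl⟩ | ⟨R, -, ⟨Γ, hΓ, rfl⟩ | ⟨G, hG', rfl⟩⟩
    · exact ⟨.atomic A, Nat.zero_le _⟩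
    · refine ⟨.ex R (ALC.sConj_induction .top .conj fun G h => (hG (hΓ h)).1), ?_⟩
      exact Nat.succ_le_succ (ALC.sConj_induction (P := (·.depth ≤ ℓ)) (Nat.zero_le _) max_le
        fun G h => (hG (hΓ h)).2)
    · exact ⟨.all R (hG hG').1, Nat.succ_le_succ (hG hG').2⟩

end SeparatingFamily

def Separates (M : Str Con Rol D1) (N : Str Con Rol D2) (F : Finset (ALC Con Rol)) (X : Set D1)
    (b : D2) : Prop :=
  ∃ C ∈ F, X ⊆ C.sem M ∧ b ∉ C.sem N

section Separation

variable [Fintype Con] [Fintype Rol] {M : Str Con Rol D1} {N : Str Con Rol D2}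

variable {ℓ : ℕ}
  (ih : ∀ {Y : Set D1} {b' : D2}, Y.Nonempty → (∀ a ∈ Y, SimL N M ℓ b' a) →
    ¬ HornSimL M N ℓ Y b' → Separates M N (hornFamily ℓ) Y b')
include ih

theorem separates_guardedFamily {Y : Set D1} {b : D2}
    (h : ¬ HornSimL M N ℓ {a ∈ Y | SimL N M ℓ b a} b) :
    Separates M N (guardedFamily ℓ (hornFamily ℓ)) Y b := by
  classical
  obtain ⟨H, hH, hYH, hbH⟩ :
      Separates M N (insert .bot (hornFamily ℓ)) {a ∈ Y | SimL N M ℓ b a} b := by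
    rcases Set.eq_empty_or_nonempty {a ∈ Y | SimL N M ℓ b a} with hY | hY
    · exact ⟨.bot, Finset.mem_insert_self _ _, hY.subset, id⟩
    · obtain ⟨C, hC, hsep⟩ := ih hY (fun _ ha => ha.2) h
      exact ⟨C, Finset.mem_insert_of_mem hC, hsep⟩
  exact ⟨_, impl_mem_guardedFamily _ hH, N.subset_sem_impl_concept_simType hYH,
    fun hb => hbH (N.mem_sem_impl_concept_simType_iff.1 hb)⟩

theorem separates_all_of_not_back {X : Set D1} {b b' : D2} {R : Rol} (hb' : (b, b') ∈ N.rolI R)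
    (hback : ∀ Y, relDown (M.rolI R) X Y → ¬ HornSimL M N ℓ Y b') :
    Separates M N (hornFamily (ℓ + 1)) X b := by
  obtain ⟨G, hG, hYG, hb'G⟩ := separates_guardedFamily ih
    (Y := {a' | ∃ a ∈ X, (a, a') ∈ M.rolI R}) (hback _ fun _ ha' => ha'.1)
  exact ⟨.all R G, all_mem_hornFamily R hG, fun a ha a' haa' => hYG ⟨a, ha, haa'⟩,
    fun hb => hb'G (hb b' hb')⟩

/-- Every successor of `b` is refuted by a guarded concept valid on `Y`, so the conjunction of all
guarded concepts valid on `Y` is refuted by all of them. -/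
theorem separates_ex_of_not_forth {X Y : Set D1} {b : D2} {R : Rol}
    (hup : relUp (M.rolI R) X Y)
    (hforth : ∀ Y' ⊆ Y, ∀ b', (b, b') ∈ N.rolI R → ¬ HornSimL M N ℓ Y' b') :
    Separates M N (hornFamily (ℓ + 1)) X b := by
  classical
  let Γ := (guardedFamily ℓ (hornFamily ℓ)).filter fun G => Y ⊆ G.sem M
  refine ⟨.ex R (.sConj (Γ : Set (ALC Con Rol))), ex_mem_hornFamily R (Finset.filter_subset _ _),
    fun a ha => ?_, ?_⟩
  · obtain ⟨a', ha'Y, haa'⟩ := hup a ha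
    exact ⟨a', haa', ALC.mem_sem_sConj.2 fun G hG => (Finset.mem_filter.1 hG).2 ha'Y⟩
  · rintro ⟨b', hb', hb'Γ⟩
    obtain ⟨G, hG, hYG, hb'G⟩ := separates_guardedFamily ih (hforth _ (Set.sep_subset _ _) b' hb')
    exact hb'G (ALC.mem_sem_sConj.1 hb'Γ G (Finset.mem_filter.2 ⟨hG, hYG⟩))

omit ih

theorem separates_hornFamily_of_not_hornSimL :
    ∀ {ℓ} {X : Set D1} {b : D2}, X.Nonempty → (∀ a ∈ X, SimL N M ℓ b a) →
      ¬ HornSimL M N ℓ X b → Separates M N (hornFamily ℓ) X b := by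
  intro ℓ X b hne hsim h
  by_contra hsep
  have hatom (A : Con) (hXA : X ⊆ M.conI A) : b ∈ N.conI A := by
    by_contra hbA
    exact hsep ⟨.atomic A, atomic_mem_hornFamily A, hXA, hbA⟩
  cases ℓ with
  | zero => exact h ⟨hne, hatom, hsim⟩
  | succ ℓ =>
    refine h ⟨⟨hne, hatom, fun a ha => (hsim a ha).mono (Nat.zero_le _)⟩, fun R Y hup => ?_,
      fun R b' hb' => ?_, hsim⟩
    · by_contra! hforth
      exact hsep (separates_ex_of_not_forth separates_hornFamily_of_not_hornSimL hup hforth)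
    · by_contra! hback
      exact hsep (separates_all_of_not_back separates_hornFamily_of_not_hornSimL hb' hback)

end Separation

section Characterization

variable [Fintype Con] [Fintype Rol] {M : Str Con Rol D1} {N : Str Con Rol D2} {ℓ : ℕ}
  {X : Set D1} {b : D2}

theorem leHornDepth.restrict (h : leHornDepth M N ℓ X b) :
    leHornDepth M N ℓ {a ∈ X | SimL N M ℓ b a} b := fun _ hC hd hX =>
  N.mem_sem_impl_concept_simType_iff.1 <| h _ (.impl (SimType.isELU_concept _) hC)
    (max_le (SimType.depth_concept_le _) hd) (N.subset_sem_impl_concept_simType hX)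

theorem hornSimL_of_leHornDepth (h : leHornDepth M N ℓ X b)
    (hsim : ∀ a ∈ X, SimL N M ℓ b a) : HornSimL M N ℓ X b := by
  by_contra hX
  obtain ⟨C, hC, hXC, hbC⟩ := separates_hornFamily_of_not_hornSimL h.nonempty hsim hX
  obtain ⟨hHorn, hd⟩ := isHorn_and_depth_le_of_mem_hornFamily hC
  exact hbC (h C hHorn hd hXC)

theorem leHornDepth_iff_exists_hornSimL :
    leHornDepth M N ℓ X b ↔ ∃ X₀ : Set D1, X₀ ⊆ X ∧ X₀.Nonempty ∧ HornSimL M N ℓ X₀ b :=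
  ⟨fun h => ⟨_, Set.sep_subset _ _, h.restrict.nonempty,
      hornSimL_of_leHornDepth h.restrict fun _ ha => ha.2⟩,
    fun ⟨_, hX₀, _, h⟩ => (leHornDepth_of_hornSimL h).mono hX₀⟩

theorem leHorn_iff_exists_hornSim [Finite D1] [Finite D2] :
    leHorn M N X b ↔ ∃ X₀ : Set D1, X₀ ⊆ X ∧ X₀.Nonempty ∧ HornSim M N X₀ b := by
  simp only [leHorn_iff_forall_leHornDepth, leHornDepth_iff_exists_hornSimL,
    hornSim_iff_forall_hornSimL]
  constructor
  · intro h
    obtain ⟨X₀, hX₀⟩ := exists_forall_of_forall_exists_antitone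
      (fun X₀ ℓ m hlm ⟨hsub, hne, hs⟩ => ⟨hsub, hne, hs.mono hlm⟩) h
    exact ⟨X₀, (hX₀ 0).1, (hX₀ 0).2.1, fun ℓ => (hX₀ ℓ).2.2⟩
  · exact fun ⟨X₀, hsub, hne, hs⟩ ℓ => ⟨X₀, hsub, hne, hs ℓ⟩

end Characterization

theorem hornALC_ef_game_set_general {Con Rol : Type} [Fintype Con] [Fintype Rol]
    {D1 D2 : Type}
    (M : Str Con Rol D1) (N : Str Con Rol D2) (X : Set D1) (b : D2) :
    (∀ ℓ : ℕ, leHornDepth M N ℓ X b ↔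
      ∃ X₀ : Set D1, X₀ ⊆ X ∧ X₀.Nonempty ∧ HornSimL M N ℓ X₀ b) ∧
    (Finite D1 → Finite D2 → (leHorn M N X b ↔
      ∃ X₀ : Set D1, X₀ ⊆ X ∧ X₀.Nonempty ∧ HornSim M N X₀ b)) :=
  ⟨fun _ => leHornDepth_iff_exists_hornSimL, fun _ _ => leHorn_iff_exists_hornSim⟩

/-- For any finite vocabulary τ, pointed τ-structures `𝔄,X` (with `X ≠ ∅`) and `𝔅,b`,
and any `ℓ < ω`: `𝔄,X ≤^ℓ_hornALC 𝔅,b` iff there exists a nonempty `X₀ ⊆ X` with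
`𝔄,X₀ ⪯^ℓ_horn 𝔅,b`.  If `𝔄` and `𝔅` are finite, then `𝔄,X ≤_hornALC 𝔅,b` iff
there exists a nonempty `X₀ ⊆ X` with `𝔄,X₀ ⪯_horn 𝔅,b`. -/
theorem hornALC_ef_game_set {Con Rol : Type} [Fintype Con] [Fintype Rol]
    {D1 D2 : Type} [Nonempty D1] [Nonempty D2]
    (M : Str Con Rol D1) (N : Str Con Rol D2) (X : Set D1) (hX : X.Nonempty) (b : D2) :
    (∀ ℓ : ℕ, leHornDepth M N ℓ X b ↔
      ∃ X₀ : Set D1, X₀ ⊆ X ∧ X₀.Nonempty ∧ HornSimL M N ℓ X₀ b) ∧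
    (Finite D1 → Finite D2 → (leHorn M N X b ↔
      ∃ X₀ : Set D1, X₀ ⊆ X ∧ X₀.Nonempty ∧ HornSim M N X₀ b)) :=
  hornALC_ef_game_set_general M N X b
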